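/- arXiv:1502.06354 — 3 statements merged into one kernel-verified Lean document; each statement's English description precedes it below -/
import Mathlib

section
/- Let Z_1,…,Z_d be i.i.d. exponential random variables with unit mean, and let Z_1^* ≥ Z_2^* ≥ … ≥ Z_d^* be their values sorted in decreasing order. Then for any 1 ≤ m ≤ d, E[∑_{i=1}^m Z_i^*] ≤ m·(log(d/m) + 1). -/
/-!
For every threshold `u ≥ 0`, any `m` of the `Z i` sum to at most `m * u + ∑ i, (Z i - u)⁺`,
and `E (Z - u)⁺ = exp (-u)` for a unit exponential `Z`. Hence the expected sum of the `m`
largest is at most `m * u + d * exp (-u)`, and `u = log (d / m)` minimises this bound.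
-/

open MeasureTheory ProbabilityTheory Real Set Filter Topology
open scoped ENNReal NNReal

section ExponentialTail

variable {r : ℝ} (u : ℝ)

lemma hasDerivAt_exponential_tail_antideriv (x : ℝ) (hr : r ≠ 0) :
    HasDerivAt (fun x => -(x - u + r⁻¹) * exp (-(r * x))) ((x - u) * (r * exp (-(r * x)))) x := by
  have h : HasDerivAt (fun x => -(x - u + r⁻¹) * exp (-(r * x)))
      (-1 * exp (-(r * x)) + -(x - u + r⁻¹) * (exp (-(r * x)) * -(r * 1))) x :=
    (((hasDerivAt_id x).sub_const u).add_const r⁻¹).neg.mul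
      ((hasDerivAt_id x).const_mul r).neg.exp
  convert h using 1
  field_simp
  ring

lemma tendsto_exponential_tail_antideriv (hr : 0 < r) :
    Tendsto (fun x => -(x - u + r⁻¹) * exp (-(r * x))) atTop (𝓝 0) := by
  have hlin : Tendsto (fun x => r * x) atTop atTop := tendsto_id.const_mul_atTop hr
  have h1 : Tendsto (fun x => r * x * exp (-(r * x))) atTop (𝓝 0) := by
    simpa [Function.comp_def] using (tendsto_pow_mul_exp_neg_atTop_nhds_zero 1).comp hlin
  have h2 : Tendsto (fun x => exp (-(r * x))) atTop (𝓝 0) :=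
    tendsto_exp_neg_atTop_nhds_zero.comp hlin
  have := (h1.const_mul (-r⁻¹)).add (h2.const_mul (u - r⁻¹))
  simp only [mul_zero, add_zero] at this
  refine this.congr fun x => ?_
  field_simp
  ring

lemma integrableOn_exponential_tail (hr : 0 < r) :
    IntegrableOn (fun x => (x - u) * (r * exp (-(r * x)))) (Ioi u) :=
  integrableOn_Ioi_deriv_of_nonneg
    (hasDerivAt_exponential_tail_antideriv u u hr.ne').continuousAt.continuousWithinAt
    (fun x _ => hasDerivAt_exponential_tail_antideriv u x hr.ne')
    (fun x hx => mul_nonneg (sub_nonneg.2 hx.le) (by positivity))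
    (tendsto_exponential_tail_antideriv u hr)

lemma integral_exponential_tail (hr : 0 < r) :
    ∫ x in Ioi u, (x - u) * (r * exp (-(r * x))) = exp (-(r * u)) / r := by
  rw [integral_Ioi_of_hasDerivAt_of_nonneg
    (hasDerivAt_exponential_tail_antideriv u u hr.ne').continuousAt.continuousWithinAt
    (fun x _ => hasDerivAt_exponential_tail_antideriv u x hr.ne')
    (fun x hx => mul_nonneg (sub_nonneg.2 hx.le) (by positivity))
    (tendsto_exponential_tail_antideriv u hr)]
  field_simp
  ring

variable {u}

lemma exponentialPDFReal_smul_max_sub (hr : 0 < r) (hu : 0 ≤ u) :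
    (fun x => (exponentialPDFReal r x).toNNReal • max (x - u) 0)
      = (Ioi u).indicator (fun x => (x - u) * (r * exp (-(r * x)))) := by
  funext x
  rcases le_or_gt x u with hxu | hux
  · simp [max_eq_right (sub_nonpos.2 hxu), indicator_of_notMem (notMem_Ioi.2 hxu)]
  · have hx : 0 ≤ x := hu.trans hux.le
    rw [indicator_of_mem (mem_Ioi.2 hux), max_eq_left (sub_nonneg.2 hux.le), NNReal.smul_def,
      smul_eq_mul, Real.coe_toNNReal _ (exponentialPDFReal_nonneg hr x)]
    simp only [exponentialPDFReal, gammaPDFReal, hx, ↓reduceIte, rpow_one, Gamma_one, div_one,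
      sub_self, rpow_zero, mul_one]
    ring

lemma expMeasure_eq_withDensity_toNNReal (r : ℝ) :
    expMeasure r = volume.withDensity fun x => ((exponentialPDFReal r x).toNNReal : ℝ≥0∞) :=
  rfl

lemma integrable_max_sub_expMeasure (hr : 0 < r) (hu : 0 ≤ u) :
    Integrable (fun x => max (x - u) 0) (expMeasure r) := by
  rw [expMeasure_eq_withDensity_toNNReal,
    integrable_withDensity_iff_integrable_smul (measurable_exponentialPDFReal r).real_toNNReal,
    exponentialPDFReal_smul_max_sub hr hu]
  exact (integrableOn_exponential_tail u hr).integrable_indicator measurableSet_Ioi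

lemma integral_max_sub_expMeasure (hr : 0 < r) (hu : 0 ≤ u) :
    ∫ x, max (x - u) 0 ∂expMeasure r = exp (-(r * u)) / r := by
  rw [expMeasure_eq_withDensity_toNNReal,
    integral_withDensity_eq_integral_smul (measurable_exponentialPDFReal r).real_toNNReal,
    exponentialPDFReal_smul_max_sub hr hu, integral_indicator measurableSet_Ioi,
    integral_exponential_tail u hr]

end ExponentialTail

lemma sum_le_card_mul_add_sum_max_sub {ι : Type*} [Fintype ι] (s : Finset ι) (z : ι → ℝ)
    (u : ℝ) : ∑ i ∈ s, z i ≤ s.card * u + ∑ i, max (z i - u) 0 :=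
  calc ∑ i ∈ s, z i ≤ ∑ i ∈ s, (u + max (z i - u) 0) :=
        Finset.sum_le_sum fun i _ => by linarith [le_max_left (z i - u) 0]
    _ = s.card * u + ∑ i ∈ s, max (z i - u) 0 := by
        rw [Finset.sum_add_distrib, Finset.sum_const, nsmul_eq_mul]
    _ ≤ s.card * u + ∑ i, max (z i - u) 0 := by
        gcongr
        exact s.subset_univ

lemma integral_le_mul_add_card_mul_exp_neg {Ω ι : Type*} [MeasurableSpace Ω] [Fintype ι]
    {P : Measure Ω} [IsProbabilityMeasure P] {r u : ℝ} (hr : 0 < r) (hu : 0 ≤ u)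
    {Z : ι → Ω → ℝ} (hZmeas : ∀ i, AEMeasurable (Z i) P)
    (hZdist : ∀ i, P.map (Z i) = expMeasure r) {m : ℕ} {Y : Ω → ℝ}
    (hY : ∀ ω, ∃ s : Finset ι, s.card = m ∧ Y ω = ∑ i ∈ s, Z i ω) :
    ∫ ω, Y ω ∂P ≤ m * u + Fintype.card ι * (exp (-(r * u)) / r) := by
  have hcont : Continuous fun x : ℝ => max (x - u) 0 := by fun_prop
  have htail_int : ∀ i, Integrable (fun ω => max (Z i ω - u) 0) P := fun i =>
    (integrable_map_measure hcont.aestronglyMeasurable (hZmeas i)).1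
      (by rw [hZdist i]; exact integrable_max_sub_expMeasure hr hu)
  have htail_val : ∀ i, ∫ ω, max (Z i ω - u) 0 ∂P = exp (-(r * u)) / r := fun i => by
    rw [← integral_map (f := fun x => max (x - u) 0) (hZmeas i)
      (by rw [hZdist i]; exact hcont.aestronglyMeasurable), hZdist i, integral_max_sub_expMeasure hr hu]
  have hg_int : Integrable (fun ω => m * u + ∑ i, max (Z i ω - u) 0) P :=
    (integrable_const _).add (integrable_finsetSum _ fun i _ => htail_int i)
  by_cases hYint : Integrable Y P
  · calc ∫ ω, Y ω ∂P ≤ ∫ ω, (m * u + ∑ i, max (Z i ω - u) 0) ∂P := by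
          refine integral_mono hYint hg_int fun ω => ?_
          obtain ⟨s, hs, hYs⟩ := hY ω
          simpa only [hYs, hs] using sum_le_card_mul_add_sum_max_sub s (Z · ω) u
      _ = m * u + Fintype.card ι * (exp (-(r * u)) / r) := by
          rw [integral_add (integrable_const _) (integrable_finsetSum _ fun i _ => htail_int i),
            integral_const, integral_finsetSum _ fun i _ => htail_int i]
          simp [htail_val]
  · -- a non-integrable `Y` has Bochner integral `0`
    rw [integral_undef hYint]
    positivity

theorem expected_top_m_of_exponentials_general {Ω : Type*} [MeasurableSpace Ω]
    (P : Measure Ω) [IsProbabilityMeasure P] (d : ℕ)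
    (Z : Fin d → Ω → ℝ) (hZmeas : ∀ i, Measurable (Z i))
    (hZdist : ∀ i, Measure.map (Z i) P = expMeasure 1)
    (m : ℕ) (hm : 1 ≤ m) (hmd : m ≤ d)
    (Y : Ω → ℝ)
    (hYmem : ∀ ω, ∃ s ∈ Finset.powersetCard m (Finset.univ : Finset (Fin d)),
      Y ω = ∑ i ∈ s, Z i ω) :
    (∫ ω, Y ω ∂P) ≤ m * (Real.log (d / m) + 1) := by
  have hm0 : (0 : ℝ) < m := by exact_mod_cast hm
  have hdm : (m : ℝ) ≤ d := by exact_mod_cast hmd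
  have hd0 : (0 : ℝ) < d := hm0.trans_le hdm
  have hu : 0 ≤ Real.log (d / m) := Real.log_nonneg ((one_le_div hm0).2 hdm)
  have hY : ∀ ω, ∃ s : Finset (Fin d), s.card = m ∧ Y ω = ∑ i ∈ s, Z i ω := fun ω => by
    obtain ⟨s, hs, hYs⟩ := hYmem ω
    exact ⟨s, (Finset.mem_powersetCard.1 hs).2, hYs⟩
  calc ∫ ω, Y ω ∂P ≤ m * Real.log (d / m) + d * (exp (-(1 * Real.log (d / m))) / 1) := by
        simpa using integral_le_mul_add_card_mul_exp_neg one_pos hu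
          (fun i => (hZmeas i).aemeasurable) hZdist hY
    _ = m * (Real.log (d / m) + 1) := by
        rw [one_mul, div_one, exp_neg, exp_log (by positivity)]
        field_simp

/-- Expected sum of the `m` largest of `d` i.i.d. unit-mean exponential random variables
is at most `m * (log (d/m) + 1)`. -/
theorem expected_top_m_of_exponentials {Ω : Type*} [MeasurableSpace Ω]
    (P : Measure Ω) [IsProbabilityMeasure P] (d : ℕ) (hd : 1 ≤ d)
    (Z : Fin d → Ω → ℝ) (hZmeas : ∀ i, Measurable (Z i))
    (hZdist : ∀ i, Measure.map (Z i) P = expMeasure 1)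
    (hZindep : iIndepFun Z P)
    (m : ℕ) (hm : 1 ≤ m) (hmd : m ≤ d)
    (Y : Ω → ℝ)
    (hYub : ∀ ω, ∀ s ∈ Finset.powersetCard m (Finset.univ : Finset (Fin d)),
      ∑ i ∈ s, Z i ω ≤ Y ω)
    (hYmem : ∀ ω, ∃ s ∈ Finset.powersetCard m (Finset.univ : Finset (Fin d)),
      Y ω = ∑ i ∈ s, Z i ω) :
    (∫ ω, Y ω ∂P) ≤ m * (Real.log (d / m) + 1) :=
  expected_top_m_of_exponentials_general P d Z hZmeas hZdist m hm hmd Y hYmem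
end

section
/- Let S ⊆ {0,1}^d be finite with ‖v‖₁ ≤ m for all v ∈ S, let ℓ̂_1,…,ℓ̂_T be nonnegative loss vectors, η_1 ≥ η_2 ≥ … ≥ η_T > 0, and let Z̃ have i.i.d. Exp(1) components. Define Ṽ_t^+ = argmin_{u∈S} u^⊤(η_t L̂_t − Z̃) with L̂_t = ∑_{s≤t} ℓ̂_s. Then for any v ∈ S, E_{Z̃}[∑_{t=1}^T (Ṽ_t^+ − v)^⊤ ℓ̂_t] ≤ m·(log(d/m) + 1)/η_T. -/
/-!
With `κₜ = 1 / ηₜ` (and `κ₀ = 0`), `Ṽₜ⁺` minimises `Φₜ(u) = u ⬝ (L̂ₜ - κₜ Z̃)` over `S`. Comparing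
`Φₜ` with `Φₜ₋₁` at `Ṽₜ⁺` and inducting on `t` (be the leader) gives
`∑ₜ Ṽₜ⁺ ⬝ ℓ̂ₜ ≤ Φ_T(v) + κ_T max_{u ∈ S} u ⬝ Z̃`, because `κ` is nondecreasing; since `Z̃ ≥ 0` this
bounds the regret by `max_{u ∈ S} u ⬝ Z̃ / η_T`. For `u ∈ [0,1]^d` with `∑ uᵢ ≤ m` and any `c ≥ 0`,
`u ⬝ Z̃ ≤ m c + ∑ᵢ (Z̃ᵢ - c)⁺`, and `E (Z̃ᵢ - c)⁺ = e^{-c}` for `Z̃ᵢ ~ Exp(1)`. The choice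
`c = log (d / m)` makes the expectation `m log (d / m) + m`.
-/

open MeasureTheory ProbabilityTheory Finset Real

lemma integrableOn_and_integral_Ioi_sub_mul_exp_neg (c : ℝ) :
    IntegrableOn (fun x => (x - c) * exp (-x)) (Set.Ioi c) ∧
      ∫ x in Set.Ioi c, (x - c) * exp (-x) = exp (-c) := by
  have hderiv : ∀ x ∈ Set.Ici c,
      HasDerivAt (fun y => -(y - c + 1) * exp (-y)) ((x - c) * exp (-x)) x := by
    intro x _
    refine ((((hasDerivAt_id x).sub_const c).add_const 1).neg.mul
      (hasDerivAt_neg x).exp).congr_deriv ?_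
    simp only [id_eq, Pi.neg_apply]
    ring
  have hpos : ∀ x ∈ Set.Ioi c, 0 ≤ (x - c) * exp (-x) := fun x hx =>
    mul_nonneg (sub_nonneg.mpr (Set.mem_Ioi.mp hx).le) (exp_pos _).le
  have hlim : Filter.Tendsto (fun y => -(y - c + 1) * exp (-y)) Filter.atTop (nhds 0) := by
    have h := (tendsto_pow_mul_exp_neg_atTop_nhds_zero 1).neg.add
      (tendsto_exp_neg_atTop_nhds_zero.const_mul (c - 1))
    simp only [pow_one, neg_zero, mul_zero, add_zero] at h
    refine h.congr fun y => ?_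
    ring
  refine ⟨integrableOn_Ioi_deriv_of_nonneg' hderiv hpos hlim, ?_⟩
  rw [integral_Ioi_of_hasDerivAt_of_nonneg' hderiv hpos hlim]
  simp

lemma expMeasure_one_eq_withDensity :
    expMeasure 1 = volume.withDensity fun x => ((exponentialPDFReal 1 x).toNNReal : ENNReal) :=
  rfl

lemma integrable_and_integral_max_sub_expMeasure_one {c : ℝ} (hc : 0 ≤ c) :
    Integrable (fun x => max (x - c) 0) (expMeasure 1) ∧
      ∫ x, max (x - c) 0 ∂expMeasure 1 = exp (-c) := by
  have hmeas : Measurable fun x => (exponentialPDFReal 1 x).toNNReal :=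
    (measurable_exponentialPDFReal 1).real_toNNReal
  -- `c ≥ 0`: the integrand lives on `(c, ∞)`, where the density is `exp (-x)`
  have hsmul : (fun x => (exponentialPDFReal 1 x).toNNReal • max (x - c) 0) =
      (Set.Ioi c).indicator fun x => (x - c) * exp (-x) := by
    funext x
    by_cases hx : c < x
    · rw [Set.indicator_of_mem (Set.mem_Ioi.mpr hx), NNReal.smul_def, smul_eq_mul,
        max_eq_left (by linarith), exponentialPDFReal, gammaPDFReal, if_pos (by linarith)]
      simp [(exp_pos _).le, mul_comm]
    · rw [Set.indicator_of_notMem (by simpa using hx), max_eq_right (by linarith), smul_zero]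
  obtain ⟨hint, hval⟩ := integrableOn_and_integral_Ioi_sub_mul_exp_neg c
  rw [expMeasure_one_eq_withDensity, integrable_withDensity_iff_integrable_smul hmeas,
    integral_withDensity_eq_integral_smul hmeas, hsmul, integral_indicator measurableSet_Ioi]
  exact ⟨hint.integrable_indicator measurableSet_Ioi, hval⟩

lemma ae_nonneg_expMeasure_one : ∀ᵐ x ∂expMeasure 1, 0 ≤ x := by
  rw [ae_iff, show {x : ℝ | ¬0 ≤ x} = Set.Iio 0 by ext; simp, expMeasure, gammaMeasure,
    withDensity_apply _ measurableSet_Iio]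
  exact lintegral_gammaPDF_of_nonpos le_rfl

section RandomPerturbation

variable {Ω : Type*} [MeasurableSpace Ω] {P : Measure Ω}

lemma integrable_and_integral_max_sub_of_map_eq_expMeasure_one {X : Ω → ℝ} (hX : Measurable X)
    (hXP : P.map X = expMeasure 1) {c : ℝ} (hc : 0 ≤ c) :
    Integrable (fun ω => max (X ω - c) 0) P ∧ ∫ ω, max (X ω - c) 0 ∂P = exp (-c) := by
  have hg : Continuous fun x : ℝ => max (x - c) 0 := by fun_prop
  obtain ⟨hint, hval⟩ := integrable_and_integral_max_sub_expMeasure_one hc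
  rw [← hXP] at hint hval
  exact ⟨(integrable_map_measure hg.aestronglyMeasurable hX.aemeasurable).mp hint,
    (integral_map hX.aemeasurable hg.aestronglyMeasurable).symm.trans hval⟩

lemma integrable_and_integral_mul_add_sum_max_sub [IsProbabilityMeasure P] {ι : Type*}
    [Fintype ι] {Z : Ω → ι → ℝ} (hZ : ∀ i, Measurable fun ω => Z ω i)
    (hZP : ∀ i, P.map (fun ω => Z ω i) = expMeasure 1) (m : ℝ) {c : ℝ} (hc : 0 ≤ c) :
    Integrable (fun ω => m * c + ∑ i, max (Z ω i - c) 0) P ∧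
      ∫ ω, m * c + ∑ i, max (Z ω i - c) 0 ∂P = m * c + Fintype.card ι * exp (-c) := by
  have h i := integrable_and_integral_max_sub_of_map_eq_expMeasure_one (hZ i) (hZP i) hc
  have hsum : Integrable (fun ω => ∑ i, max (Z ω i - c) 0) P :=
    integrable_finsetSum _ fun i _ => (h i).1
  refine ⟨(integrable_const _).add hsum, ?_⟩
  rw [integral_add (integrable_const _) hsum, integral_finsetSum _ fun i _ => (h i).1]
  simp [fun i => (h i).2]

end RandomPerturbation

section BeTheLeader

variable {ι : Type*}

noncomputable def cumulativeLoss (ℓ : ℕ → ι → ℝ) (t : ℕ) : ι → ℝ := ∑ s ∈ Icc 1 t, ℓ s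

lemma cumulativeLoss_succ (ℓ : ℕ → ι → ℝ) (t : ℕ) :
    cumulativeLoss ℓ (t + 1) = cumulativeLoss ℓ t + ℓ (t + 1) :=
  sum_Icc_succ_top (by omega) ℓ

variable [Fintype ι]

lemma dotProduct_le_mul_add_sum_max {u z : ι → ℝ} {m c : ℝ}
    (hu : ∀ i, u i ∈ Set.Icc 0 1) (hum : ∑ i, u i ≤ m) (hc : 0 ≤ c) :
    u ⬝ᵥ z ≤ m * c + ∑ i, max (z i - c) 0 := by
  have hterm (i : ι) : u i * z i ≤ u i * c + max (z i - c) 0 := by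
    obtain ⟨hu0, hu1⟩ := hu i
    nlinarith [le_max_left (z i - c) 0, le_max_right (z i - c) 0]
  calc u ⬝ᵥ z ≤ ∑ i, (u i * c + max (z i - c) 0) := sum_le_sum fun i _ => hterm i
    _ = (∑ i, u i) * c + ∑ i, max (z i - c) 0 := by rw [sum_add_distrib, sum_mul]
    _ ≤ m * c + ∑ i, max (z i - c) 0 := by gcongr

variable {S : Set (ι → ℝ)} {ℓ : ℕ → ι → ℝ} {z : ι → ℝ} {V : ℕ → ι → ℝ} {M : ℝ}

theorem sum_dotProduct_le_of_perturbed_leader {κ : ℕ → ℝ} {n : ℕ} (hκ0 : κ 0 = 0)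
    (hκ : ∀ t < n, κ t ≤ κ (t + 1)) (hVS : ∀ t, V t ∈ S)
    (hVmin : ∀ t ∈ Icc 1 n, ∀ u ∈ S,
      V t ⬝ᵥ (cumulativeLoss ℓ t - κ t • z) ≤ u ⬝ᵥ (cumulativeLoss ℓ t - κ t • z))
    (hM : ∀ u ∈ S, u ⬝ᵥ z ≤ M) :
    ∀ u ∈ S, ∑ t ∈ Icc 1 n, V t ⬝ᵥ ℓ t ≤ u ⬝ᵥ (cumulativeLoss ℓ n - κ n • z) + κ n * M := by
  induction n with
  | zero => simp [hκ0, cumulativeLoss]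
  | succ n ih =>
    intro u hu
    have hprev := ih (fun t ht => hκ t (by omega))
      (fun t ht => hVmin t (by simp at ht ⊢; omega)) (V (n + 1)) (hVS _)
    have hmin := hVmin (n + 1) (by simp) u hu
    have hgap : 0 ≤ (κ (n + 1) - κ n) * (M - V (n + 1) ⬝ᵥ z) :=
      mul_nonneg (by linarith [hκ n (by omega)]) (by linarith [hM _ (hVS (n + 1))])
    rw [sum_Icc_succ_top (by omega)]
    simp only [cumulativeLoss_succ, dotProduct_sub, dotProduct_add, dotProduct_smul,
      smul_eq_mul] at hprev hmin ⊢
    linarith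

theorem sum_sub_dotProduct_le_div_of_perturbed_leader {η : ℕ → ℝ} {T : ℕ} (hT : 1 ≤ T)
    (hηpos : ∀ t, 1 ≤ t → t ≤ T → 0 < η t)
    (hηmono : ∀ s t, 1 ≤ s → s ≤ t → t ≤ T → η t ≤ η s) (hVS : ∀ t, V t ∈ S)
    (hVmin : ∀ t, 1 ≤ t → t ≤ T → ∀ u ∈ S,
      V t ⬝ᵥ (η t • cumulativeLoss ℓ t - z) ≤ u ⬝ᵥ (η t • cumulativeLoss ℓ t - z))
    (hM : ∀ u ∈ S, u ⬝ᵥ z ≤ M) {v : ι → ℝ} (hv : v ∈ S) (hvz : 0 ≤ v ⬝ᵥ z) :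
    ∑ t ∈ Icc 1 T, (V t - v) ⬝ᵥ ℓ t ≤ M / η T := by
  set κ : ℕ → ℝ := fun t => if t = 0 then 0 else (η t)⁻¹ with hκ_def
  have hκ : ∀ t < T, κ t ≤ κ (t + 1) := by
    intro t ht
    rcases Nat.eq_zero_or_pos t with rfl | ht0
    · simpa [hκ_def] using (hηpos 1 le_rfl hT).le
    · simp only [hκ_def, if_neg (by omega : t ≠ 0), if_neg (by omega : t + 1 ≠ 0)]
      exact inv_anti₀ (hηpos _ (by omega) (by omega)) (hηmono t (t + 1) ht0 (by omega) ht)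
  have hκmin : ∀ t ∈ Icc 1 T, ∀ u ∈ S,
      V t ⬝ᵥ (cumulativeLoss ℓ t - κ t • z) ≤ u ⬝ᵥ (cumulativeLoss ℓ t - κ t • z) := by
    intro t ht u hu
    obtain ⟨ht1, htT⟩ := mem_Icc.mp ht
    have hη := hηpos t ht1 htT
    have hscale (w : ι → ℝ) :
        w ⬝ᵥ (cumulativeLoss ℓ t - κ t • z) = (η t)⁻¹ * w ⬝ᵥ (η t • cumulativeLoss ℓ t - z) := by
      simp only [hκ_def, if_neg (by omega : t ≠ 0), dotProduct_sub, dotProduct_smul,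
        smul_eq_mul]
      field_simp
    rw [hscale, hscale]
    exact mul_le_mul_of_nonneg_left (hVmin t ht1 htT u hu) (inv_nonneg.mpr hη.le)
  have hbtl := sum_dotProduct_le_of_perturbed_leader (by simp [hκ_def]) hκ hVS hκmin hM v hv
  have hκT : κ T = (η T)⁻¹ := if_neg (by omega)
  have hηT := hηpos T hT le_rfl
  have hvL : v ⬝ᵥ cumulativeLoss ℓ T = ∑ t ∈ Icc 1 T, v ⬝ᵥ ℓ t := dotProduct_sum _ _ _
  simp only [sub_dotProduct, sum_sub_distrib, dotProduct_sub, dotProduct_smul, smul_eq_mul,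
    hκT, hvL] at hbtl ⊢
  rw [div_eq_inv_mul]
  linarith [mul_nonneg (inv_nonneg.mpr hηT.le) hvz]

end BeTheLeader

theorem fpl_be_the_leader_exponential_general {Ω : Type*} [MeasurableSpace Ω]
    (P : Measure Ω) [IsProbabilityMeasure P] (d m T : ℕ)
    (hm : 1 ≤ m) (hmd : m ≤ d) (hT : 1 ≤ T)
    (S : Finset (Fin d → ℝ)) (hS01 : ∀ v ∈ S, ∀ i, v i = 0 ∨ v i = 1)
    (hSm : ∀ v ∈ S, (∑ i, v i) ≤ m)
    (lhat : ℕ → Fin d → ℝ)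
    (η : ℕ → ℝ) (hηpos : ∀ t, 1 ≤ t → t ≤ T → 0 < η t)
    (hηmono : ∀ s t, 1 ≤ s → s ≤ t → t ≤ T → η t ≤ η s)
    (Z : Ω → Fin d → ℝ) (hZmeas : ∀ i, Measurable (fun ω => Z ω i))
    (hZdist : ∀ i, Measure.map (fun ω => Z ω i) P = expMeasure 1)
    (Vp : ℕ → Ω → Fin d → ℝ)
    (hVpS : ∀ t ω, Vp t ω ∈ S)
    (hVpmin : ∀ t, 1 ≤ t → t ≤ T → ∀ ω, ∀ u ∈ S,
      (∑ i, Vp t ω i * (η t * (∑ s ∈ Finset.Icc 1 t, lhat s i) - Z ω i)) ≤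
        ∑ i, u i * (η t * (∑ s ∈ Finset.Icc 1 t, lhat s i) - Z ω i))
    (hint : ∀ t, Integrable (fun ω => ∑ i, Vp t ω i * lhat t i) P)
    (v : Fin d → ℝ) (hv : v ∈ S) :
    (∫ ω, ∑ t ∈ Finset.Icc 1 T, ∑ i, (Vp t ω i - v i) * lhat t i ∂P) ≤
      m * (Real.log (d / m) + 1) / η T := by
  have hm0 : (0 : ℝ) < m := by exact_mod_cast hm
  have hd0 : (0 : ℝ) < d := by exact_mod_cast hm.trans hmd
  have hdm : (1 : ℝ) ≤ d / m := (one_le_div hm0).mpr (by exact_mod_cast hmd)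
  set c := Real.log (d / m)
  have hc : 0 ≤ c := Real.log_nonneg hdm
  have hunit : ∀ u ∈ S, ∀ i, u i ∈ Set.Icc 0 1 := fun u hu i => by
    rcases hS01 u hu i with h | h <;> simp [h]
  have hZnonneg : ∀ᵐ ω ∂P, ∀ i, 0 ≤ Z ω i := ae_all_iff.mpr fun i =>
    ae_of_ae_map (hZmeas i).aemeasurable (hZdist i ▸ ae_nonneg_expMeasure_one)
  have hregret : ∀ᵐ ω ∂P, ∑ t ∈ Icc 1 T, ∑ i, (Vp t ω i - v i) * lhat t i ≤
      (m * c + ∑ i, max (Z ω i - c) 0) / η T := by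
    filter_upwards [hZnonneg] with ω hω
    refine sum_sub_dotProduct_le_div_of_perturbed_leader (S := S) hT hηpos hηmono
      (fun t => hVpS t ω) ?_
      (fun u hu => dotProduct_le_mul_add_sum_max (hunit u hu) (hSm u hu) hc) hv
      (sum_nonneg fun i _ => mul_nonneg (hunit v hv i).1 (hω i))
    intro t ht1 htT u hu
    simpa [dotProduct, cumulativeLoss, Finset.sum_apply] using hVpmin t ht1 htT ω u hu
  have hregret_int : Integrable (fun ω => ∑ t ∈ Icc 1 T, ∑ i, (Vp t ω i - v i) * lhat t i) P :=
    integrable_finsetSum _ fun t _ => by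
      simp only [sub_mul, sum_sub_distrib]
      exact (hint t).sub (integrable_const _)
  obtain ⟨hbound_int, hbound⟩ :=
    integrable_and_integral_mul_add_sum_max_sub hZmeas hZdist (m : ℝ) hc
  calc _ ≤ ∫ ω, (m * c + ∑ i, max (Z ω i - c) 0) / η T ∂P :=
        integral_mono_ae hregret_int (hbound_int.div_const _) hregret
    _ = m * (c + 1) / η T := by
      rw [integral_div, hbound, Fintype.card_fin, exp_neg, exp_log (div_pos hd0 hm0), inv_div]
      field_simp

/-- Be-the-leader bound for FPL with i.i.d. Exp(1) perturbations and nonincreasing learning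
rates: `E[∑ₜ (Ṽₜ⁺ − v)⊤ℓ̂ₜ] ≤ m (log(d/m) + 1) / η_T`. -/
theorem fpl_be_the_leader_exponential {Ω : Type*} [MeasurableSpace Ω]
    (P : Measure Ω) [IsProbabilityMeasure P] (d m T : ℕ)
    (hd : 1 ≤ d) (hm : 1 ≤ m) (hmd : m ≤ d) (hT : 1 ≤ T)
    (S : Finset (Fin d → ℝ)) (hS01 : ∀ v ∈ S, ∀ i, v i = 0 ∨ v i = 1)
    (hSm : ∀ v ∈ S, (∑ i, v i) ≤ m)
    (lhat : ℕ → Fin d → ℝ) (hlhat : ∀ t i, 0 ≤ lhat t i)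
    (η : ℕ → ℝ) (hηpos : ∀ t, 1 ≤ t → t ≤ T → 0 < η t)
    (hηmono : ∀ s t, 1 ≤ s → s ≤ t → t ≤ T → η t ≤ η s)
    (Z : Ω → Fin d → ℝ) (hZmeas : ∀ i, Measurable (fun ω => Z ω i))
    (hZdist : ∀ i, Measure.map (fun ω => Z ω i) P = expMeasure 1)
    (hZindep : iIndepFun (fun i ω => Z ω i) P)
    (Vp : ℕ → Ω → Fin d → ℝ)
    (hVpS : ∀ t ω, Vp t ω ∈ S)
    (hVpmin : ∀ t, 1 ≤ t → t ≤ T → ∀ ω, ∀ u ∈ S,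
      (∑ i, Vp t ω i * (η t * (∑ s ∈ Finset.Icc 1 t, lhat s i) - Z ω i)) ≤
        ∑ i, u i * (η t * (∑ s ∈ Finset.Icc 1 t, lhat s i) - Z ω i))
    (hint : ∀ t, Integrable (fun ω => ∑ i, Vp t ω i * lhat t i) P)
    (v : Fin d → ℝ) (hv : v ∈ S) :
    (∫ ω, ∑ t ∈ Finset.Icc 1 T, ∑ i, (Vp t ω i - v i) * lhat t i ∂P) ≤
      m * (Real.log (d / m) + 1) / η T :=
  fpl_be_the_leader_exponential_general P d m T hm hmd hT S hS01 hSm lhat η hηpos hηmono Z hZmeas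
    hZdist Vp hVpS hVpmin hint v hv
end

section
/- Let D > 0, let s_1,…,s_T be nonnegative reals with s_t ≤ 1/η_t where η_t = √(D/S_{t-1}), S_0 = 1/D, S_t = S_0 + ∑_{k≤t} s_k. Then ∑_{t=1}^T η_t s_t ≤ 4D/η_T. -/
/-!
Since `S (t-1) ≥ 1/D`, the constraint `s t ≤ 1/η t = √(S (t-1)/D)` forces `s t ≤ S (t-1)`, so
`S t ≤ 2 S (t-1)` and `η t ≤ √(2D / S t)`. Hence `∑ η t s t ≤ √(2D) ∑ s t / √(S t)`, and the
self-confident tuning bound `s t / √(S t) ≤ 2 (√(S t) - √(S (t-1)))` telescopes to `2 √(S T)`.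
Finally `2 √(2D) √(S T) ≤ 4 √D √(S (T-1)) = 4D / η T`.
-/

open Real Finset

lemma sub_div_sqrt_le_two_mul_sqrt_sub {a b : ℝ} (ha : 0 ≤ a) (hab : a ≤ b) :
    (b - a) / √b ≤ 2 * (√b - √a) := by
  rcases (ha.trans hab).eq_or_lt with hb | hb
  · obtain rfl : a = 0 := le_antisymm (hb ▸ hab) ha
    simp [← hb]
  have hsqrt : √a ≤ √b := sqrt_le_sqrt hab
  have hfactor : b - a = (√b - √a) * (√b + √a) := by
    nth_rw 1 [← sq_sqrt ha, ← sq_sqrt hb.le]; ring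
  replace hb : 0 < √b := sqrt_pos.mpr hb
  rw [div_le_iff₀ hb, hfactor]
  nlinarith [sqrt_nonneg a]

lemma sum_Icc_sub_div_sqrt_le {S : ℕ → ℝ} {T : ℕ} (h0 : 0 ≤ S 0)
    (hS : MonotoneOn S (Set.Iic T)) :
    ∑ t ∈ Icc 1 T, (S t - S (t - 1)) / √(S t) ≤ 2 * (√(S T) - √(S 0)) := by
  induction T with
  | zero => simp
  | succ n ih =>
    have hn : n ∈ Set.Iic (n + 1) := Set.mem_Iic.mpr n.le_succ
    rw [sum_Icc_succ_top (by omega), Nat.add_sub_cancel]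
    have hprev := ih (hS.mono (Set.Iic_subset_Iic.mpr n.le_succ))
    have hlast := sub_div_sqrt_le_two_mul_sqrt_sub
      (h0.trans (hS (by simp) hn n.zero_le)) (hS hn (Set.mem_Iic.mpr le_rfl) n.le_succ)
    linarith

lemma le_of_le_one_div_sqrt_div {D a x : ℝ} (hD : 0 < D) (ha : 1 / D ≤ a)
    (hx : x ≤ 1 / √(D / a)) : x ≤ a := by
  have ha0 : 0 < a := (one_div_pos.mpr hD).trans_le ha
  have hDa : 1 ≤ a * D := by rwa [div_le_iff₀ hD] at ha
  calc x ≤ √(a / D) := by rwa [one_div, ← sqrt_inv, inv_div] at hx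
    _ ≤ a := sqrt_le_iff.mpr ⟨ha0.le, by rw [div_le_iff₀ hD]; nlinarith⟩

lemma sqrt_div_le_sqrt_two_mul_div {D a b : ℝ} (hD : 0 ≤ D) (ha : 0 < a) (hb0 : 0 < b)
    (hb : b ≤ 2 * a) : √(D / a) ≤ √(2 * D) / √b := by
  rw [← sqrt_div (by positivity)]
  exact sqrt_le_sqrt (by rw [div_le_div_iff₀ ha hb0]; nlinarith)

lemma sqrt_div_mul_le_sqrt_two_mul_mul_div_sqrt_add {D a x : ℝ} (hD : 0 < D) (ha : 1 / D ≤ a)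
    (hx0 : 0 ≤ x) (hx : x ≤ 1 / √(D / a)) : √(D / a) * x ≤ √(2 * D) * (x / √(a + x)) := by
  have ha0 : 0 < a := (one_div_pos.mpr hD).trans_le ha
  have hxa := le_of_le_one_div_sqrt_div hD ha hx
  calc √(D / a) * x ≤ √(2 * D) / √(a + x) * x := by
        gcongr
        exact sqrt_div_le_sqrt_two_mul_div hD.le ha0 (by linarith) (by linarith)
    _ = √(2 * D) * (x / √(a + x)) := by ring

lemma two_mul_sqrt_two_mul_mul_sqrt_add_le {D a x : ℝ} (hD : 0 < D) (ha : 1 / D ≤ a)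
    (hx : x ≤ 1 / √(D / a)) : 2 * √(2 * D) * √(a + x) ≤ 4 * D / √(D / a) := by
  have ha0 : 0 < a := (one_div_pos.mpr hD).trans_le ha
  have hxa := le_of_le_one_div_sqrt_div hD ha hx
  have hrhs : 4 * D / √(D / a) = 2 * √(2 * D) * √(2 * a) := by
    have h2 : √2 * √2 = 2 := mul_self_sqrt zero_le_two
    have hDD : √D * √D = D := mul_self_sqrt hD.le
    have : 0 < √a := sqrt_pos.mpr ha0
    have : 0 < √D := sqrt_pos.mpr hD
    rw [sqrt_div hD.le, sqrt_mul zero_le_two, sqrt_mul zero_le_two, div_div_eq_mul_div,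
      div_eq_iff (by positivity)]
    linear_combination (-2 * √a * √D * √D) * h2 - 4 * √a * hDD
  rw [hrhs]
  gcongr
  linarith

/-- Adaptive learning-rate schedule of FPL-TrIX: with `η t = √(D / S (t-1))`, `S 0 = 1/D` and
`0 ≤ s t ≤ 1/η t`, one has `∑ₜ ηₜ sₜ ≤ 4 D / η_T`. -/
theorem adaptive_rate_sum_bound (D : ℝ) (hD : 0 < D) (T : ℕ) (hT : 1 ≤ T)
    (s S η : ℕ → ℝ)
    (hS0 : S 0 = 1 / D)
    (hSdef : ∀ t : ℕ, S (t + 1) = S t + s (t + 1))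
    (hη : ∀ t : ℕ, 1 ≤ t → η t = Real.sqrt (D / S (t - 1)))
    (hs : ∀ t : ℕ, 1 ≤ t → t ≤ T → 0 ≤ s t ∧ s t ≤ 1 / η t) :
    (∑ t ∈ Finset.Icc 1 T, η t * s t) ≤ 4 * D / η T := by
  have hmono : MonotoneOn S (Set.Iic T) := by
    refine monotoneOn_of_le_succ Set.ordConnected_Iic fun t _ _ ht => ?_
    rw [Order.succ_eq_add_one, Set.mem_Iic] at ht
    rw [Order.succ_eq_add_one, hSdef]
    linarith [(hs (t + 1) (by omega) ht).1]
  have hround : ∀ t ∈ Icc 1 T, 1 / D ≤ S (t - 1) ∧ S t = S (t - 1) + s t ∧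
      0 ≤ s t ∧ s t ≤ 1 / √(D / S (t - 1)) := by
    intro t ht
    obtain ⟨ht1, htT⟩ := mem_Icc.mp ht
    refine ⟨hS0 ▸ hmono (by simp) (Set.mem_Iic.mpr (by omega)) (Nat.zero_le _), ?_,
      hη t ht1 ▸ hs t ht1 htT⟩
    simpa only [Nat.sub_add_cancel ht1] using hSdef (t - 1)
  have hstep : ∀ t ∈ Icc 1 T, η t * s t ≤ √(2 * D) * ((S t - S (t - 1)) / √(S t)) := by
    intro t ht
    obtain ⟨ha, hSt, hx0, hx⟩ := hround t ht
    rw [hη t (mem_Icc.mp ht).1, hSt, add_sub_cancel_left]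
    exact sqrt_div_mul_le_sqrt_two_mul_mul_div_sqrt_add hD ha hx0 hx
  obtain ⟨ha, hST, -, hx⟩ := hround T (mem_Icc.mpr ⟨hT, le_rfl⟩)
  have hS0' : 0 ≤ S 0 := by rw [hS0]; positivity
  calc ∑ t ∈ Icc 1 T, η t * s t
      ≤ ∑ t ∈ Icc 1 T, √(2 * D) * ((S t - S (t - 1)) / √(S t)) := sum_le_sum hstep
    _ = √(2 * D) * ∑ t ∈ Icc 1 T, (S t - S (t - 1)) / √(S t) := (mul_sum ..).symm
    _ ≤ √(2 * D) * (2 * (√(S T) - √(S 0))) := by gcongr; exact sum_Icc_sub_div_sqrt_le hS0' hmono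
    _ ≤ 2 * √(2 * D) * √(S T) := by nlinarith [sqrt_nonneg (S 0), sqrt_nonneg (2 * D)]
    _ ≤ 4 * D / η T := by
      rw [hη T hT, hST]
      exact two_mul_sqrt_two_mul_mul_sqrt_add_le hD ha hx
end
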